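/- arXiv:1503.03742 — 2 statements merged into one kernel-verified Lean document; each statement's English description precedes it below -/
import Mathlib

section
/- Assume {(a_i,u_i)}_{i=1}^n is superincreasing and let θ be the greedy solution of K. Then K = {x ∈ rect(u) : x ⪯ θ}; that is, the superincreasing knapsack consists exactly of the points of rect(u) that are lexicographically smaller than or equal to its greedy solution. -/
/-- `y` is lexicographically smaller than or equal to `x`: either `y = x`, or at the
largest index `s` where they differ, `y s < x s`. -/
def lexLe {n : ℕ} (y x : Fin n → ℤ) : Prop :=
  y = x ∨ ∃ s : Fin n, y s < x s ∧ ∀ k : Fin n, s < k → y k = x k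

/-!
The greedy solution fills each residual capacity `r_i = b - ∑_{k > i} a_k θ_k` as far as the bound
`u_i` allows: `a_i θ_i ≤ r_i`, and `r_i < a_i (θ_i + 1)` whenever `θ_i < u_i`. Compare a point `x`
of the box with `θ` at the last index `s` where they differ. If `x_s < θ_s`, superincreasingness
bounds the cost of `x` below `s` by `a_s`, so `x` costs at most what `θ` costs from `s` on, which
fits in `b`. If `x_s > θ_s`, then `θ_s < u_s`, so `a_s x_s` alone already exceeds `r_s`.
-/

open Finset

section Knapsack

variable {ι : Type*} [LinearOrder ι]

theorem Finset.sum_eq_sum_Iio_add_add_sum_Ioi [Fintype ι] [LocallyFiniteOrderTop ι]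
    [LocallyFiniteOrderBot ι] {M : Type*} [AddCommMonoid M] (f : ι → M) (s : ι) :
    ∑ k, f k = ∑ k ∈ Iio s, f k + f s + ∑ k ∈ Ioi s, f k := by
  rw [← sum_filter_add_sum_filter_not univ (· < s), add_assoc, add_comm (f s),
    sum_Ioi_add_eq_sum_Ici]
  congr 2 <;> ext k <;> simp

theorem exists_ne_forall_lt_eq [Finite ι] {β : Type*} {x y : ι → β} (h : x ≠ y) :
    ∃ s, x s ≠ y s ∧ ∀ k, s < k → x k = y k := by
  classical
  have := Fintype.ofFinite ι
  have hne : (univ.filter fun k => x k ≠ y k).Nonempty := by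
    obtain ⟨k, hk⟩ := Function.ne_iff.mp h
    exact ⟨k, by simpa using hk⟩
  refine ⟨_, (mem_filter.mp (max'_mem _ hne)).2, fun k hk => ?_⟩
  by_contra hxk
  exact hk.not_ge (le_max' _ k (by simpa using hxk))

def IsSuperincreasing [LocallyFiniteOrderBot ι] (a u : ι → ℤ) : Prop :=
  ∀ s, ∑ k ∈ Iio s, a k * u k ≤ a s

def IsGreedySolution [LocallyFiniteOrderTop ι] (a u : ι → ℤ) (b : ℤ) (θ : ι → ℤ) : Prop :=
  ∀ i, θ i = min (u i) ((b - ∑ k ∈ Ioi i, a k * θ k).fdiv (a i))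

namespace IsGreedySolution

variable [LocallyFiniteOrderTop ι] {a u θ x : ι → ℤ} {b : ℤ}

theorem mul_le_residual (hθ : IsGreedySolution a u b θ) {i : ι} (ha : 0 < a i) :
    a i * θ i ≤ b - ∑ k ∈ Ioi i, a k * θ k := by
  set r := b - ∑ k ∈ Ioi i, a k * θ k
  have hθi : θ i = min (u i) (r / a i) := Int.fdiv_eq_ediv_of_nonneg r ha.le ▸ hθ i
  calc a i * θ i ≤ a i * (r / a i) := mul_le_mul_of_nonneg_left (hθi ▸ min_le_right _ _) ha.le
    _ ≤ r := Int.mul_ediv_self_le ha.ne'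

theorem residual_lt (hθ : IsGreedySolution a u b θ) {i : ι} (ha : 0 < a i) (hθu : θ i < u i) :
    b - ∑ k ∈ Ioi i, a k * θ k < a i * (θ i + 1) := by
  set r := b - ∑ k ∈ Ioi i, a k * θ k
  have hθi : θ i = min (u i) (r / a i) := Int.fdiv_eq_ediv_of_nonneg r ha.le ▸ hθ i
  obtain ⟨hmin, -⟩ | ⟨hmin, -⟩ := min_cases (u i) (r / a i)
  · exact absurd (hθi.trans hmin) hθu.ne
  · rw [hθi, hmin]
    linarith [Int.lt_mul_ediv_self_add (x := r) ha]

variable [Fintype ι] [LocallyFiniteOrderBot ι]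

theorem sum_le [Nonempty ι] (hθ : IsGreedySolution a u b θ) (ha : ∀ i, 0 < a i) :
    ∑ i, a i * θ i ≤ b := by
  obtain ⟨i₀, hi₀⟩ := exists_minimal (univ_nonempty (α := ι))
  have hIio : Iio i₀ = ∅ := Iio_eq_empty.mpr fun k hk => hi₀.2 (mem_univ k) hk
  have := hθ.mul_le_residual (ha i₀)
  rw [sum_eq_sum_Iio_add_add_sum_Ioi _ i₀, hIio, sum_empty]
  linarith

theorem sum_le_of_lt (hθ : IsGreedySolution a u b θ) (ha : ∀ i, 0 < a i)
    (hsup : IsSuperincreasing a u) (hxu : ∀ i, x i ≤ u i) {s : ι} (hlt : x s < θ s)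
    (hagree : ∀ k, s < k → x k = θ k) : ∑ i, a i * x i ≤ b := by
  have htail : ∑ k ∈ Ioi s, a k * x k = ∑ k ∈ Ioi s, a k * θ k :=
    sum_congr rfl fun k hk => by rw [hagree k (mem_Ioi.mp hk)]
  have hhead : ∑ k ∈ Iio s, a k * x k ≤ ∑ k ∈ Iio s, a k * u k :=
    sum_le_sum fun k _ => mul_le_mul_of_nonneg_left (hxu k) (ha k).le
  have hs : a s * x s ≤ a s * (θ s - 1) := mul_le_mul_of_nonneg_left (by omega) (ha s).le
  have := hθ.mul_le_residual (ha s)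
  rw [sum_eq_sum_Iio_add_add_sum_Ioi _ s, htail]
  linarith [hsup s]

theorem lt_sum_of_gt (hθ : IsGreedySolution a u b θ) (ha : ∀ i, 0 < a i) (hx : ∀ i, 0 ≤ x i)
    {s : ι} (hxu : x s ≤ u s) (hgt : θ s < x s) (hagree : ∀ k, s < k → x k = θ k) :
    b < ∑ i, a i * x i := by
  have htail : ∑ k ∈ Ioi s, a k * x k = ∑ k ∈ Ioi s, a k * θ k :=
    sum_congr rfl fun k hk => by rw [hagree k (mem_Ioi.mp hk)]
  have hhead : 0 ≤ ∑ k ∈ Iio s, a k * x k :=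
    sum_nonneg fun k _ => mul_nonneg (ha k).le (hx k)
  have hs : a s * (θ s + 1) ≤ a s * x s := mul_le_mul_of_nonneg_left hgt (ha s).le
  have := hθ.residual_lt (ha s) (hgt.trans_le hxu)
  rw [sum_eq_sum_Iio_add_add_sum_Ioi _ s, htail]
  linarith

theorem sum_le_iff [Nonempty ι] (hθ : IsGreedySolution a u b θ) (ha : ∀ i, 0 < a i)
    (hsup : IsSuperincreasing a u) (hx : ∀ i, 0 ≤ x i ∧ x i ≤ u i) :
    ∑ i, a i * x i ≤ b ↔ x = θ ∨ ∃ s, x s < θ s ∧ ∀ k, s < k → x k = θ k := by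
  constructor
  · intro hxb
    refine or_iff_not_imp_left.mpr fun hxθ => ?_
    obtain ⟨s, hne, hagree⟩ := exists_ne_forall_lt_eq hxθ
    refine ⟨s, lt_of_le_of_ne (not_lt.mp fun hgt => ?_) hne, hagree⟩
    exact (hθ.lt_sum_of_gt ha (fun i => (hx i).1) (hx s).2 hgt hagree).not_ge hxb
  · rintro (rfl | ⟨s, hlt, hagree⟩)
    · exact hθ.sum_le ha
    · exact hθ.sum_le_of_lt ha hsup (fun i => (hx i).2) hlt hagree

end IsGreedySolution

end Knapsack

theorem isSuperincreasing_of_sum_Iic_le {n : ℕ} {a u : Fin n → ℤ} (ha : ∀ i, 0 < a i)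
    (hsi : ∀ i j : Fin n, (j : ℕ) = (i : ℕ) + 1 → ∑ k ∈ Iic i, a k * u k ≤ a j) :
    IsSuperincreasing a u := by
  intro s
  rcases Nat.eq_zero_or_pos s with hs | hs
  · have hIio : Iio s = ∅ := by
      ext k
      simp only [mem_Iio, Fin.lt_def, notMem_empty, iff_false]
      omega
    simp [hIio, (ha s).le]
  · let i : Fin n := ⟨s - 1, by omega⟩
    have hIio : Iio s = Iic i := by
      ext k
      simp only [mem_Iio, mem_Iic, Fin.lt_def, Fin.le_def, i]
      omega
    rw [hIio]
    exact hsi i s (by simp only [i]; omega)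

theorem stmt_2_general {n : ℕ} (hn : 1 ≤ n)
    (a u : Fin n → ℤ) (ha : ∀ i, 0 < a i)
    (b : ℤ)
    (hsi : ∀ i j : Fin n, (j : ℕ) = (i : ℕ) + 1 →
      ∑ k ∈ Finset.Iic i, a k * u k ≤ a j)
    (θ : Fin n → ℤ)
    (hθ : ∀ i : Fin n,
      θ i = min (u i) ((b - ∑ k ∈ Finset.Ioi i, a k * θ k).fdiv (a i))) :
    {x : Fin n → ℤ | (∀ i, 0 ≤ x i ∧ x i ≤ u i) ∧ ∑ i, a i * x i ≤ b} =
      {x : Fin n → ℤ | (∀ i, 0 ≤ x i ∧ x i ≤ u i) ∧ lexLe x θ} := by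
  have : Nonempty (Fin n) := ⟨⟨0, hn⟩⟩
  ext x
  exact and_congr_right fun hx =>
    IsGreedySolution.sum_le_iff hθ ha (isSuperincreasing_of_sum_Iic_le ha hsi) hx

/-- a superincreasing knapsack equals the set of points of `rect u` that are
lexicographically smaller than or equal to its greedy solution `θ`. -/
theorem stmt_2 {n : ℕ} (hn : 1 ≤ n)
    (a u : Fin n → ℤ) (ha : ∀ i, 0 < a i) (hu : ∀ i, 1 ≤ u i)
    (b : ℤ) (hb : 0 < b)
    (hsi : ∀ i j : Fin n, (j : ℕ) = (i : ℕ) + 1 →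
      ∑ k ∈ Finset.Iic i, a k * u k ≤ a j)
    (θ : Fin n → ℤ)
    (hθ : ∀ i : Fin n,
      θ i = min (u i) ((b - ∑ k ∈ Finset.Ioi i, a k * θ k).fdiv (a i))) :
    {x : Fin n → ℤ | (∀ i, 0 ≤ x i ∧ x i ≤ u i) ∧ ∑ i, a i * x i ≤ b} =
      {x : Fin n → ℤ | (∀ i, 0 ≤ x i ∧ x i ≤ u i) ∧ lexLe x θ} :=
  stmt_2_general hn a u ha b hsi θ hθ
end

section
/- Assume {(a_i,u_i)}_{i=1}^n is superincreasing and a_i u_i ≤ b for all i, and let θ be the greedy solution of K. Let I = {i : θ_i ≥ 1}. For c ∈ ℝⁿ and j ∈ I define f_j(c) = max{∑_{i=1}^{j} c_i x_i : x ∈ K and x_k = θ_k for all k ∈ I with k > j}, and set f_0(c) = 0. Then for every j ∈ I, f_j(c) = max( max(c_j,0)·(θ_j − 1) + ∑_{i=1}^{j−1} max(c_i,0)·u_i , c_j θ_j + f_{p(j)}(c) ), where p(j) = max{i ∈ I : i < j} if some element of I is smaller than j, and p(j) = 0 otherwise. -/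
/-!
By the greedy choice, a point `x ∈ K` that agrees with `θ` strictly above `k` has `x k ≤ θ k`.
Descending from the top, this shows that a point of `K` fixed to `θ` on `I ∩ (j, n]` is fixed to
`θ` on all of `(j, n]` (where `θ k = 0` it is squeezed to `0`), and that `x j ≤ θ j`.
If `x j < θ j`, superincreasingness makes every choice of `x` below `j` within the box feasible,
which gives the first term. If `x j = θ j`, the same descent forces `x = 0` strictly between
`p(j)` and `j`, so what remains is exactly the problem defining `f_{p(j)}`.
-/

open Finset

variable {ι : Type*} [LinearOrder ι]

theorem sum_eq_sum_Iic_add_sum_Ioi [Fintype ι] [LocallyFiniteOrderBot ι] [LocallyFiniteOrderTop ι]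
    {M : Type*} [AddCommMonoid M] (g : ι → M) (k : ι) :
    ∑ i, g i = ∑ i ∈ Iic k, g i + ∑ i ∈ Ioi k, g i := by
  rw [← sum_union (disjoint_left.2 fun i hi hi' => (mem_Iic.1 hi).not_gt (mem_Ioi.1 hi'))]
  congr 1
  ext i
  simp [le_or_gt]

section Bot

variable [LocallyFiniteOrderBot ι] {M : Type*} [AddCommMonoid M]

theorem sum_Iic_eq_add_sum_Iio (g : ι → M) (k : ι) :
    ∑ i ∈ Iic k, g i = g k + ∑ i ∈ Iio k, g i := by
  rw [← Iio_insert, sum_insert (by simp)]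

theorem sum_Iio_eq_sum_Iic_of_eq_zero {g : ι → M} {i j : ι}
    (hij : i < j) (hg : ∀ k, i < k → k < j → g k = 0) :
    ∑ k ∈ Iio j, g k = ∑ k ∈ Iic i, g k := by
  refine (sum_subset (fun k hk => mem_Iio.2 ((mem_Iic.1 hk).trans_lt hij)) fun k hk hk' => ?_).symm
  exact hg k (not_le.1 (mem_Iic.not.1 hk')) (mem_Iio.1 hk)

end Bot

theorem Finset.eq_Ici_min'_of_isUpperSet [LocallyFiniteOrderTop ι] {s : Finset ι}
    (hs : IsUpperSet (s : Set ι)) (hne : s.Nonempty) : s = Ici (s.min' hne) := by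
  ext k
  exact ⟨fun hk => mem_Ici.2 (s.min'_le k hk), fun hk => hs (mem_Ici.1 hk) (s.min'_mem hne)⟩

def knapsack [Fintype ι] (a u : ι → ℤ) (b : ℤ) : Set (ι → ℤ) :=
  {x | (∀ i, 0 ≤ x i ∧ x i ≤ u i) ∧ ∑ i, a i * x i ≤ b}

section Greedy

variable [LocallyFiniteOrderTop ι]

def IsGreedy (a u : ι → ℤ) (b : ℤ) (θ : ι → ℤ) : Prop :=
  ∀ i, θ i = min (u i) ((b - ∑ k ∈ Ioi i, a k * θ k).fdiv (a i))

namespace IsGreedy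

variable {a u θ : ι → ℤ} {b : ℤ}

theorem le_iff (hθ : IsGreedy a u b θ) (ha : ∀ i, 0 < a i) {y : ℤ} {i : ι} :
    y ≤ θ i ↔ y ≤ u i ∧ a i * y ≤ b - ∑ k ∈ Ioi i, a k * θ k := by
  rw [hθ i, le_min_iff, Int.fdiv_eq_ediv_of_nonneg _ (ha i).le, Int.le_ediv_iff_mul_le (ha i),
    mul_comm]

theorem sum_le_of_isUpperSet (hθ : IsGreedy a u b θ) (ha : ∀ i, 0 < a i) (hb : 0 ≤ b)
    {s : Finset ι} (hs : IsUpperSet (s : Set ι)) : ∑ k ∈ s, a k * θ k ≤ b := by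
  rcases s.eq_empty_or_nonempty with rfl | hne
  · simpa using hb
  have hmin := ((hθ.le_iff ha (i := s.min' hne)).1 le_rfl).2
  rw [s.eq_Ici_min'_of_isUpperSet hs hne, ← Ioi_insert, sum_insert (by simp)]
  linarith

theorem mem_knapsack [Fintype ι] (hθ : IsGreedy a u b θ) (ha : ∀ i, 0 < a i) (hb : 0 ≤ b)
    (hu : ∀ i, 0 ≤ u i) : θ ∈ knapsack a u b := by
  refine ⟨fun i => ⟨(hθ.le_iff ha).2 ⟨hu i, ?_⟩, ((hθ.le_iff ha).1 le_rfl).1⟩, ?_⟩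
  · simpa using hθ.sum_le_of_isUpperSet ha hb (s := Ioi i) fun _ _ h h' => by
      simpa using (mem_Ioi.1 h').trans_le h
  · simpa using hθ.sum_le_of_isUpperSet ha hb (s := univ) (by simpa using isUpperSet_univ)

end IsGreedy

end Greedy

theorem mul_le_max_zero_mul {c x y : ℝ} (hx : 0 ≤ x) (hxy : x ≤ y) : c * x ≤ max c 0 * y :=
  (mul_le_mul_of_nonneg_right (le_max_left c 0) hx).trans
    (mul_le_mul_of_nonneg_left hxy (le_max_right c 0))

theorem mul_cast_ite_nonneg (c : ℝ) (y : ℤ) :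
    c * ((if 0 ≤ c then y else 0 : ℤ) : ℝ) = max c 0 * y := by
  split_ifs with h
  · rw [max_eq_left h]
  · simp [max_eq_right (not_le.1 h).le]

section Values

variable [Fintype ι] [LocallyFiniteOrderBot ι]

/-- The values of the subproblem `f_j`, with `x` fixed to `θ` on all of `(j, n]`
(see `IsGreedy.setOf_eq_tailValues`). -/
def tailValues (a u : ι → ℤ) (b : ℤ) (θ : ι → ℤ) (c : ι → ℝ) (j : ι) : Set ℝ :=
  {v | ∃ x ∈ knapsack a u b, (∀ k, j < k → x k = θ k) ∧ v = ∑ i ∈ Iic j, c i * (x i : ℝ)}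

/-- Its greatest element is `f_{p(j)}`, or `f_0 = 0` when `I` has no element below `j`. -/
def prefixValues (a u : ι → ℤ) (b : ℤ) (θ : ι → ℤ) (c : ι → ℝ) (j : ι) : Set ℝ :=
  {v | ∃ x ∈ knapsack a u b, (∀ k, j ≤ k → x k = θ k) ∧ v = ∑ i ∈ Iio j, c i * (x i : ℝ)}

variable {a u θ : ι → ℤ} {b : ℤ} {c : ι → ℝ} {x : ι → ℤ}

theorem add_mem_tailValues {j : ι} {P : ℝ} (hP : P ∈ prefixValues a u b θ c j) :
    c j * (θ j : ℝ) + P ∈ tailValues a u b θ c j := by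
  obtain ⟨x, hx, hxj, rfl⟩ := hP
  refine ⟨x, hx, fun k hjk => hxj k hjk.le, ?_⟩
  rw [sum_Iic_eq_add_sum_Iio, hxj j le_rfl]

variable [LocallyFiniteOrderTop ι]

namespace IsGreedy

theorem le_of_eq_on_Ioi (hθ : IsGreedy a u b θ) (ha : ∀ i, 0 < a i) (hx : x ∈ knapsack a u b)
    {k : ι} (hxk : ∀ i, k < i → x i = θ i) : x k ≤ θ k := by
  refine (hθ.le_iff ha).2 ⟨(hx.1 k).2, ?_⟩
  have hsplit := sum_eq_sum_Iic_add_sum_Ioi (fun i => a i * x i) k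
  rw [sum_Iic_eq_add_sum_Iio] at hsplit
  have htail : ∑ i ∈ Ioi k, a i * x i = ∑ i ∈ Ioi k, a i * θ i :=
    sum_congr rfl fun i hi => by rw [hxk i (mem_Ioi.1 hi)]
  have hhead : 0 ≤ ∑ i ∈ Iio k, a i * x i :=
    sum_nonneg fun i _ => mul_nonneg (ha i).le (hx.1 i).1
  linarith [hx.2]

theorem eq_of_forall_ge (hθ : IsGreedy a u b θ) (ha : ∀ i, 0 < a i) (hx : x ∈ knapsack a u b)
    {k : ι} (hxI : ∀ i, k ≤ i → 1 ≤ θ i → x i = θ i) : x k = θ k := by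
  induction k using WellFoundedGT.induction with
  | _ k ih =>
  have hle := hθ.le_of_eq_on_Ioi ha hx fun i hki => ih i hki fun l hil => hxI l (hki.le.trans hil)
  rcases lt_or_ge (θ k) 1 with h | h
  · have := (hx.1 k).1
    omega
  · exact hxI k le_rfl h

theorem eq_of_eq_on_Ici (hθ : IsGreedy a u b θ) (ha : ∀ i, 0 < a i) (hx : x ∈ knapsack a u b)
    {j k : ι} (hxj : ∀ l, j ≤ l → x l = θ l) (hgap : ∀ l, k ≤ l → l < j → θ l < 1) :
    x k = θ k :=
  hθ.eq_of_forall_ge ha hx fun l hkl hl =>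
    hxj l (not_lt.1 fun hlj => (hgap l hkl hlj).not_ge hl)

theorem mem_knapsack_of_lt (hθ : IsGreedy a u b θ) (ha : ∀ i, 0 < a i) {j : ι}
    (hsi : ∑ i ∈ Iio j, a i * u i ≤ a j) (hx : ∀ i, 0 ≤ x i ∧ x i ≤ u i) (hxj : x j < θ j)
    (hxt : ∀ k, j < k → x k = θ k) : x ∈ knapsack a u b := by
  refine ⟨hx, ?_⟩
  have hsplit := sum_eq_sum_Iic_add_sum_Ioi (fun i => a i * x i) j
  rw [sum_Iic_eq_add_sum_Iio] at hsplit
  have htail : ∑ i ∈ Ioi j, a i * x i = ∑ i ∈ Ioi j, a i * θ i :=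
    sum_congr rfl fun i hi => by rw [hxt i (mem_Ioi.1 hi)]
  have hhead : ∑ i ∈ Iio j, a i * x i ≤ ∑ i ∈ Iio j, a i * u i :=
    sum_le_sum fun i _ => mul_le_mul_of_nonneg_left (hx i).2 (ha i).le
  have hxj' : a j * x j ≤ a j * (θ j - 1) := mul_le_mul_of_nonneg_left (by omega) (ha j).le
  linarith [((hθ.le_iff ha (i := j)).1 le_rfl).2]

theorem prefixValues_eq_tailValues (hθ : IsGreedy a u b θ) (ha : ∀ i, 0 < a i) {i j : ι}
    (hij : i < j) (hgap : ∀ k, i < k → k < j → θ k < 1) :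
    prefixValues a u b θ c j = tailValues a u b θ c i := by
  have hsum : ∀ x ∈ knapsack a u b, (∀ k, i < k → x k = θ k) →
      ∑ k ∈ Iio j, c k * (x k : ℝ) = ∑ k ∈ Iic i, c k * (x k : ℝ) := fun x hx hxi =>
    sum_Iio_eq_sum_Iic_of_eq_zero hij fun k hik hkj => by
      have := hxi k hik
      have := hgap k hik hkj
      have := (hx.1 k).1
      have hxk : x k = 0 := by omega
      simp [hxk]
  ext v
  constructor
  · rintro ⟨x, hx, hxj, rfl⟩
    have hxi : ∀ k, i < k → x k = θ k := fun k hik =>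
      hθ.eq_of_eq_on_Ici ha hx hxj fun l hkl hlj => hgap l (hik.trans_le hkl) hlj
    exact ⟨x, hx, hxi, hsum x hx hxi⟩
  · rintro ⟨x, hx, hxi, rfl⟩
    exact ⟨x, hx, fun k hjk => hxi k (hij.trans_le hjk), (hsum x hx hxi).symm⟩

theorem prefixValues_eq_zero (hθ : IsGreedy a u b θ) (ha : ∀ i, 0 < a i) (hb : 0 ≤ b)
    (hu : ∀ i, 0 ≤ u i) {j : ι} (hnone : ∀ k, k < j → θ k < 1) :
    prefixValues a u b θ c j = {0} := by
  have hθ0 : ∀ k, k < j → θ k = 0 := fun k hkj => by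
    have := hnone k hkj
    have := ((hθ.mem_knapsack ha hb hu).1 k).1
    omega
  ext v
  constructor
  · rintro ⟨x, hx, hxj, rfl⟩
    refine sum_eq_zero fun k hk => ?_
    have hxk := hθ.eq_of_eq_on_Ici ha hx hxj (k := k) fun l _ hlj => hnone l hlj
    simp [hxk, hθ0 k (mem_Iio.1 hk)]
  · rintro rfl
    refine ⟨θ, hθ.mem_knapsack ha hb hu, fun _ _ => rfl, (sum_eq_zero fun k hk => ?_).symm⟩
    simp [hθ0 k (mem_Iio.1 hk)]

theorem setOf_eq_tailValues (hθ : IsGreedy a u b θ) (ha : ∀ i, 0 < a i) (j : ι) :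
    {v : ℝ | ∃ x : ι → ℤ, (∀ i, 0 ≤ x i ∧ x i ≤ u i) ∧ (∑ i, a i * x i ≤ b) ∧
      (∀ k, j < k → 1 ≤ θ k → x k = θ k) ∧ v = ∑ i ∈ Iic j, c i * (x i : ℝ)} =
      tailValues a u b θ c j := by
  ext v
  constructor
  · rintro ⟨x, hbox, hsum, hxI, rfl⟩
    exact ⟨x, ⟨hbox, hsum⟩, fun k hjk => hθ.eq_of_forall_ge ha ⟨hbox, hsum⟩
      fun l hkl => hxI l (hjk.trans_le hkl), rfl⟩
  · rintro ⟨x, ⟨hbox, hsum⟩, hxt, rfl⟩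
    exact ⟨x, hbox, hsum, fun k hjk _ => hxt k hjk, rfl⟩

theorem sum_max_zero_mul_mem_tailValues (hθ : IsGreedy a u b θ) (ha : ∀ i, 0 < a i) (hb : 0 ≤ b)
    (hu : ∀ i, 0 ≤ u i) {j : ι} (hsi : ∑ i ∈ Iio j, a i * u i ≤ a j) (hj : 1 ≤ θ j) :
    max (c j) 0 * ((θ j : ℝ) - 1) + ∑ i ∈ Iio j, max (c i) 0 * (u i : ℝ) ∈
      tailValues a u b θ c j := by
  let x : ι → ℤ := fun i =>
    if i < j then (if 0 ≤ c i then u i else 0)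
    else if i = j then (if 0 ≤ c j then θ j - 1 else 0) else θ i
  have hxj : x j = if 0 ≤ c j then θ j - 1 else 0 := by simp [x]
  have hxt : ∀ k, j < k → x k = θ k := fun k hjk => by simp [x, hjk.not_gt, hjk.ne']
  have hbox : ∀ i, 0 ≤ x i ∧ x i ≤ u i := by
    intro i
    have hθi := (hθ.mem_knapsack ha hb hu).1 i
    have := hu i
    rcases lt_trichotomy i j with h | rfl | h
    · simp only [x, if_pos h]
      split_ifs <;> omega
    · rw [hxj]
      split_ifs <;> omega
    · rw [hxt i h]
      exact hθi
  refine ⟨x, hθ.mem_knapsack_of_lt ha hsi hbox (by rw [hxj]; split_ifs <;> omega) hxt, hxt, ?_⟩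
  rw [sum_Iic_eq_add_sum_Iio, hxj, mul_cast_ite_nonneg, Int.cast_sub, Int.cast_one]
  congr 1
  refine sum_congr rfl fun i hi => ?_
  simp only [x, if_pos (mem_Iio.1 hi), mul_cast_ite_nonneg]

theorem le_of_mem_tailValues (hθ : IsGreedy a u b θ) (ha : ∀ i, 0 < a i) {j : ι} {P v : ℝ}
    (hP : P ∈ upperBounds (prefixValues a u b θ c j)) (hv : v ∈ tailValues a u b θ c j) :
    v ≤ max (max (c j) 0 * ((θ j : ℝ) - 1) + ∑ i ∈ Iio j, max (c i) 0 * (u i : ℝ))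
      (c j * (θ j : ℝ) + P) := by
  obtain ⟨x, hx, hxt, rfl⟩ := hv
  rw [sum_Iic_eq_add_sum_Iio]
  rcases (hθ.le_of_eq_on_Ioi ha hx hxt).lt_or_eq with hlt | heq
  · refine le_max_of_le_left (add_le_add (mul_le_max_zero_mul ?_ ?_) ?_)
    · exact_mod_cast (hx.1 j).1
    · have : x j ≤ θ j - 1 := by omega
      exact_mod_cast this
    · exact sum_le_sum fun i _ => mul_le_max_zero_mul (by exact_mod_cast (hx.1 i).1)
        (by exact_mod_cast (hx.1 i).2)
  · have hxj : ∀ k, j ≤ k → x k = θ k := fun k hjk =>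
      hjk.eq_or_lt.elim (fun h => h ▸ heq) (hxt k)
    rw [heq]
    exact le_max_of_le_right (by linarith [hP ⟨x, hx, hxj, rfl⟩])

theorem isGreatest_tailValues (hθ : IsGreedy a u b θ) (ha : ∀ i, 0 < a i) (hb : 0 ≤ b)
    (hu : ∀ i, 0 ≤ u i) {j : ι} (hsi : ∑ i ∈ Iio j, a i * u i ≤ a j) (hj : 1 ≤ θ j) {P : ℝ}
    (hP : IsGreatest (prefixValues a u b θ c j) P) :
    IsGreatest (tailValues a u b θ c j)
      (max (max (c j) 0 * ((θ j : ℝ) - 1) + ∑ i ∈ Iio j, max (c i) 0 * (u i : ℝ))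
        (c j * (θ j : ℝ) + P)) := by
  refine ⟨?_, fun v hv => hθ.le_of_mem_tailValues ha hP.2 hv⟩
  rcases max_choice (max (c j) 0 * ((θ j : ℝ) - 1) + ∑ i ∈ Iio j, max (c i) 0 * (u i : ℝ))
    (c j * (θ j : ℝ) + P) with h | h <;> rw [h]
  · exact hθ.sum_max_zero_mul_mem_tailValues ha hb hu hsi hj
  · exact add_mem_tailValues hP.1

end IsGreedy

end Values

theorem Fin.sum_Iio_le_of_superincreasing {n : ℕ} {a u : Fin n → ℤ} (ha : ∀ i, 0 < a i)
    (hsi : ∀ i j : Fin n, (j : ℕ) = (i : ℕ) + 1 → ∑ k ∈ Iic i, a k * u k ≤ a j) (j : Fin n) :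
    ∑ k ∈ Iio j, a k * u k ≤ a j := by
  obtain ⟨_ | m, hm⟩ := j
  · have hIio : Iio (⟨0, hm⟩ : Fin n) = ∅ := by
      ext k
      simp [Fin.lt_def]
    simpa [hIio] using (ha _).le
  · have hIio : Iio (⟨m + 1, hm⟩ : Fin n) = Iic ⟨m, by omega⟩ := by
      ext k
      simp [Fin.lt_def, Fin.le_def]
    rw [hIio]
    exact hsi _ _ rfl

theorem stmt_4_general {n : ℕ}
    (a u : Fin n → ℤ) (ha : ∀ i, 0 < a i) (hu : ∀ i, 1 ≤ u i)
    (b : ℤ) (hb : 0 < b)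
    (hsi : ∀ i j : Fin n, (j : ℕ) = (i : ℕ) + 1 →
      ∑ k ∈ Finset.Iic i, a k * u k ≤ a j)
    (θ : Fin n → ℤ)
    (hθ : ∀ i : Fin n,
      θ i = min (u i) ((b - ∑ k ∈ Finset.Ioi i, a k * θ k).fdiv (a i)))
    (c : Fin n → ℝ) (f p : Fin n → ℝ)
    (hf : ∀ j : Fin n, 1 ≤ θ j →
      IsGreatest {v : ℝ | ∃ x : Fin n → ℤ,
        (∀ i, 0 ≤ x i ∧ x i ≤ u i) ∧ (∑ i, a i * x i ≤ b) ∧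
        (∀ k, j < k → 1 ≤ θ k → x k = θ k) ∧
        v = ∑ i ∈ Finset.Iic j, c i * (x i : ℝ)} (f j))
    (hp : ∀ j : Fin n,
      ((∃ i, i < j ∧ 1 ≤ θ i) →
        ∃ i, i < j ∧ 1 ≤ θ i ∧ (∀ k, k < j → 1 ≤ θ k → k ≤ i) ∧ p j = f i) ∧
      ((¬ ∃ i, i < j ∧ 1 ≤ θ i) → p j = 0)) :
    ∀ j : Fin n, 1 ≤ θ j →
      f j = max
        (max (c j) 0 * ((θ j : ℝ) - 1) + ∑ i ∈ Finset.Iio j, max (c i) 0 * (u i : ℝ))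
        (c j * (θ j : ℝ) + p j) := by
  intro j hj
  have hθ' : IsGreedy a u b θ := hθ
  have hu' : ∀ i, 0 ≤ u i := fun i => zero_le_one.trans (hu i)
  have hf' : ∀ i, 1 ≤ θ i → IsGreatest (tailValues a u b θ c i) (f i) := fun i hi =>
    hθ'.setOf_eq_tailValues ha i ▸ hf i hi
  have hP : IsGreatest (prefixValues a u b θ c j) (p j) := by
    by_cases hex : ∃ i, i < j ∧ 1 ≤ θ i
    · obtain ⟨i, hij, hi, hmax, hpj⟩ := (hp j).1 hex
      rw [hpj, hθ'.prefixValues_eq_tailValues ha hij fun k hik hkj =>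
        not_le.1 fun hk => (hmax k hkj hk).not_gt hik]
      exact hf' i hi
    · rw [(hp j).2 hex, hθ'.prefixValues_eq_zero ha hb.le hu' fun k hkj =>
        not_le.1 fun hk => hex ⟨k, hkj, hk⟩]
      exact isGreatest_singleton
  exact (hf' j hj).unique (hθ'.isGreatest_tailValues ha hb.le hu'
    (Fin.sum_Iio_le_of_superincreasing ha hsi j) hj hP)

/-- the dynamic-programming recursion for optimizing over a superincreasing
knapsack.  Here `f j` is the maximum of `∑_{i ≤ j} c i * x i` over the points `x ∈ K`
with `x k = θ k` for all `k ∈ I` with `k > j`, and `p j` is `f` at the largest element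
of `I` below `j` (or `0` if there is none). -/
theorem stmt_4 {n : ℕ} (hn : 1 ≤ n)
    (a u : Fin n → ℤ) (ha : ∀ i, 0 < a i) (hu : ∀ i, 1 ≤ u i)
    (b : ℤ) (hb : 0 < b)
    (hub : ∀ i, a i * u i ≤ b)
    (hsi : ∀ i j : Fin n, (j : ℕ) = (i : ℕ) + 1 →
      ∑ k ∈ Finset.Iic i, a k * u k ≤ a j)
    (θ : Fin n → ℤ)
    (hθ : ∀ i : Fin n,
      θ i = min (u i) ((b - ∑ k ∈ Finset.Ioi i, a k * θ k).fdiv (a i)))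
    (c : Fin n → ℝ) (f p : Fin n → ℝ)
    (hf : ∀ j : Fin n, 1 ≤ θ j →
      IsGreatest {v : ℝ | ∃ x : Fin n → ℤ,
        (∀ i, 0 ≤ x i ∧ x i ≤ u i) ∧ (∑ i, a i * x i ≤ b) ∧
        (∀ k, j < k → 1 ≤ θ k → x k = θ k) ∧
        v = ∑ i ∈ Finset.Iic j, c i * (x i : ℝ)} (f j))
    (hp : ∀ j : Fin n,
      ((∃ i, i < j ∧ 1 ≤ θ i) →
        ∃ i, i < j ∧ 1 ≤ θ i ∧ (∀ k, k < j → 1 ≤ θ k → k ≤ i) ∧ p j = f i) ∧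
      ((¬ ∃ i, i < j ∧ 1 ≤ θ i) → p j = 0)) :
    ∀ j : Fin n, 1 ≤ θ j →
      f j = max
        (max (c j) 0 * ((θ j : ℝ) - 1) + ∑ i ∈ Finset.Iio j, max (c i) 0 * (u i : ℝ))
        (c j * (θ j : ℝ) + p j) :=
  stmt_4_general a u ha hu b hb hsi θ hθ c f p hf hp
end
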